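/- Fix an integer k ≥ 2 and a lag m ∈ ℕ. For each T, let Z_{T,1}, …, Z_{T,T} be square-integrable real random variables on a common probability space with common mean μ_T such that Cov(Z_{T,s}, Z_{T,t}) = 0 whenever |s − t| > m. Let S_T be a random subset of {1, …, T} of size m_T = ⌈T/k⌉ that is independent of (Z_{T,1}, …, Z_{T,T}). If max_{1≤t≤T} Var(Z_{T,t}) → 0 as T → ∞, then √T · ((1/m_T) · Σ_{t∈S_T} Z_{T,t} − μ_T) → 0 in probability. (Corollary 3: for a fixed-m m-dependent time series, as-independent sample splitting — ignoring the temporal ordering — makes the empirical process term o_P(1/√T).) -/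

import Mathlib

/-!
STATEMENT 9 (Corollary 3: as-independent sample splitting for a fixed-lag
m-dependent time series):
Fix k ≥ 2 and a lag m.  For each T, Z_{T,1}, …, Z_{T,T} square-integrable with
common mean μ_T such that Cov(Z_{T,s}, Z_{T,t}) = 0 whenever |s − t| > m.
S_T a random subset of {1, …, T} of size m_T = ⌈T/k⌉ independent of the
vector.  If max_t Var(Z_{T,t}) → 0 as T → ∞, then
√T · ((1/m_T)·Σ_{t∈S_T} Z_{T,t} − μ_T) → 0 in probability.
-/

open MeasureTheory ProbabilityTheory Filter

/-- A (finite, hence discrete) measurable-space structure on `Finset α`. -/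
instance Finset.instMeasurableSpace' {α : Type*} : MeasurableSpace (Finset α) := ⊤

/-- The covariance of two real random variables. -/
noncomputable def covar {Ω : Type*} [MeasurableSpace Ω] (P : Measure Ω)
    (X Y : Ω → ℝ) : ℝ :=
  ∫ ω, (X ω - ∫ a, X a ∂P) * (Y ω - ∫ a, Y a ∂P) ∂P

section Aux
variable {Ω : Type*} [MeasurableSpace Ω] {P : Measure Ω} [IsProbabilityMeasure P]

omit [IsProbabilityMeasure P] in
lemma memL2_mul_integrable {X Y : Ω → ℝ} (hX : MemLp X 2 P) (hY : MemLp Y 2 P) :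
    Integrable (fun ω => X ω * Y ω) P := by
  rw [← memLp_one_iff_integrable]
  have : (1 : ENNReal)/1 = 1/2 + 1/2 := by
    rw [ENNReal.div_add_div_same, one_add_one_eq_two,
      ENNReal.div_self two_ne_zero ENNReal.ofNat_ne_top, div_one]
  exact hY.smul hX

lemma variance_eq_integral' {X : Ω → ℝ} (hX : MemLp X 2 P) :
    variance X P = ∫ ω, (X ω - ∫ a, X a ∂P)^2 ∂P := by
  exact variance_eq_integral hX.1.aemeasurable

lemma abs_covar_le {X Y : Ω → ℝ} (hX : MemLp X 2 P) (hY : MemLp Y 2 P) :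
    |covar P X Y| ≤ (variance X P + variance Y P) / 2 := by
  set cX := ∫ a, X a ∂P with hcX
  set cY := ∫ a, Y a ∂P with hcY
  have hX' : MemLp (fun ω => X ω - cX) 2 P := hX.sub (memLp_const cX)
  have hY' : MemLp (fun ω => Y ω - cY) 2 P := hY.sub (memLp_const cY)
  have hint : Integrable (fun ω => (X ω - cX) * (Y ω - cY)) P := memL2_mul_integrable hX' hY'
  have hX2 : Integrable (fun ω => (X ω - cX)^2) P := by
    simpa [pow_two] using memL2_mul_integrable hX' hX'
  have hY2 : Integrable (fun ω => (Y ω - cY)^2) P := by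
    simpa [pow_two] using memL2_mul_integrable hY' hY'
  calc |covar P X Y| ≤ ∫ ω, |(X ω - cX) * (Y ω - cY)| ∂P := by
        have := norm_integral_le_integral_norm (μ := P)
          (fun ω => (X ω - cX) * ((Y ω - cY)) : Ω → ℝ)
        simpa [covar, Real.norm_eq_abs, abs_mul, ← hcX, ← hcY] using this
    _ ≤ ∫ ω, ((X ω - cX)^2 + (Y ω - cY)^2)/2 ∂P := by
        refine integral_mono hint.abs ((hX2.add hY2).div_const 2) fun ω => ?_
        have h1 : |(X ω - cX) * (Y ω - cY)| = |X ω - cX| * |Y ω - cY| := abs_mul _ _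
        nlinarith [sq_nonneg (|X ω - cX| - |Y ω - cY|), sq_abs (X ω - cX), sq_abs (Y ω - cY),
          abs_nonneg (X ω - cX), abs_nonneg (Y ω - cY)]
    _ = (variance X P + variance Y P) / 2 := by
        rw [integral_div, integral_add hX2 hY2, variance_eq_integral' hX, variance_eq_integral' hY]

lemma variance_finset_sum' {ι : Type*} (s : Finset ι) (X : ι → Ω → ℝ)
    (hX : ∀ i, MemLp (X i) 2 P) :
    variance (fun ω => ∑ i ∈ s, X i ω) P = ∑ i ∈ s, ∑ j ∈ s, covar P (X i) (X j) := by
  have hsum : MemLp (fun ω => ∑ i ∈ s, X i ω) 2 P := by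
    have h := memLp_finset_sum' s (fun i (_ : i ∈ s) => hX i)
    rwa [Finset.sum_fn] at h
  have hint : ∀ i, Integrable (X i) P := fun i => (hX i).integrable one_le_two
  have hmean : (∫ ω, (∑ i ∈ s, X i ω) ∂P) = ∑ i ∈ s, ∫ ω, X i ω ∂P :=
    integral_finset_sum s (fun i _ => hint i)
  rw [variance_eq_integral' hsum, hmean]
  have key : ∀ ω, ((∑ i ∈ s, X i ω) - ∑ i ∈ s, ∫ a, X i a ∂P)^2
      = ∑ i ∈ s, ∑ j ∈ s, (X i ω - ∫ a, X i a ∂P) * (X j ω - ∫ a, X j a ∂P) := by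
    intro ω
    rw [← Finset.sum_sub_distrib, pow_two, Finset.sum_mul_sum]
  simp_rw [key]
  have h1 : ∀ i j, Integrable (fun a => (X i a - ∫ a, X i a ∂P) * (X j a - ∫ a, X j a ∂P)) P :=
    fun i j => memL2_mul_integrable ((hX i).sub (memLp_const _)) ((hX j).sub (memLp_const _))
  have h2 := integral_finset_sum (μ := P) s
    (f := fun i ω => ∑ j ∈ s, (X i ω - ∫ a, X i a ∂P) * (X j ω - ∫ a, X j a ∂P))
    (fun i _ => integrable_finset_sum s fun j _ => h1 i j)
  rw [h2]
  exact Finset.sum_congr rfl fun i _ =>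
    integral_finset_sum (μ := P) s
      (f := fun j ω => (X i ω - ∫ a, X i a ∂P) * (X j ω - ∫ a, X j a ∂P)) (fun j _ => h1 i j)

end Aux

theorem as_independent_split_m_dependent_time_series
    (k : ℕ) (hk : 2 ≤ k) (m : ℕ)
    (Ω : ℕ → Type*) [∀ T, MeasurableSpace (Ω T)]
    (P : ∀ T, Measure (Ω T)) [∀ T, IsProbabilityMeasure (P T)]
    (Z : ∀ T, Fin T → Ω T → ℝ)
    (hZmeas : ∀ T t, Measurable (Z T t))
    (hZ2 : ∀ T t, MemLp (Z T t) 2 (P T))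
    (μ : ℕ → ℝ) (hmean : ∀ T t, ∫ ω, Z T t ω ∂(P T) = μ T)
    (hcov : ∀ T (s t : Fin T), (m : ℤ) < |((s : ℕ) : ℤ) - ((t : ℕ) : ℤ)| →
        covar (P T) (Z T s) (Z T t) = 0)
    (S : ∀ T, Ω T → Finset (Fin T)) (hSmeas : ∀ T, Measurable (S T))
    (hScard : ∀ T ω, (S T ω).card = ⌈(T : ℝ) / k⌉₊)
    (hSindep : ∀ T, IndepFun (S T) (fun ω t => Z T t ω) (P T))
    (hvar : Tendsto (fun T => ⨆ t : Fin T, variance (Z T t) (P T)) atTop (nhds 0)) :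
    ∀ ε > (0 : ℝ),
      Tendsto (fun T => P T {ω | ε <
          |Real.sqrt T * ((⌈(T : ℝ) / k⌉₊ : ℝ)⁻¹ * ∑ t ∈ S T ω, Z T t ω - μ T)|})
        atTop (nhds 0) := by
  classical
  intro ε hε
  have hk0 : 0 < (k : ℝ) := by positivity
  -- the limiting upper bound
  have hC : Tendsto (fun T => ENNReal.ofReal
      (((k : ℝ) * (2*m+1)) * (⨆ t : Fin T, variance (Z T t) (P T)) / ε^2)) atTop (nhds 0) := by
    rw [← ENNReal.ofReal_zero]
    refine (ENNReal.continuous_ofReal.tendsto 0).comp ?_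
    have h := (hvar.const_mul ((k : ℝ) * (2*m+1))).div_const (ε^2)
    simpa using h
  refine tendsto_of_tendsto_of_tendsto_of_le_of_le' tendsto_const_nhds hC
    (Eventually.of_forall fun T => zero_le) ?_
  filter_upwards [eventually_ge_atTop 1] with T hT
  set V := ⨆ t : Fin T, variance (Z T t) (P T) with hV
  set mT := ⌈(T : ℝ) / k⌉₊ with hmT
  have hV0 : 0 ≤ V := Real.iSup_nonneg fun t => variance_nonneg _ _
  have hvarle : ∀ t : Fin T, variance (Z T t) (P T) ≤ V := fun t => hV ▸
    le_ciSup (f := fun t : Fin T => variance (Z T t) (P T))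
      ((Set.finite_range _).bddAbove) t
  have hmT1 : 1 ≤ mT := Nat.one_le_iff_ne_zero.mpr (by
    simp only [hmT, ne_eq, Nat.ceil_eq_zero, not_le]
    positivity)
  have hmTpos : (0 : ℝ) < mT := by exact_mod_cast hmT1
  have hTk : (T : ℝ) ≤ k * mT := by
    have h1 : (T : ℝ) / k ≤ mT := Nat.le_ceil _
    calc (T : ℝ) = k * ((T : ℝ)/k) := by field_simp
      _ ≤ k * mT := by nlinarith
  have hsqT : (0:ℝ) < Real.sqrt T := Real.sqrt_pos.mpr (by exact_mod_cast hT)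
  -- variance of a sum over any subset
  have hvs : ∀ s : Finset (Fin T),
      variance (fun ω => ∑ t ∈ s, Z T t ω) (P T) ≤ s.card * ((2*m+1) * V) := by
    intro s
    rw [variance_finset_sum' s _ (fun i => hZ2 T i)]
    have inner : ∀ i ∈ s, ∑ j ∈ s, covar (P T) (Z T i) (Z T j) ≤ (2*m+1) * V := by
      intro i _
      have hle : ∑ j ∈ s, covar (P T) (Z T i) (Z T j)
          ≤ ∑ j ∈ s.filter (fun j : Fin T => |((i:ℕ):ℤ) - ((j:ℕ):ℤ)| ≤ (m:ℤ)), |covar (P T) (Z T i) (Z T j)| := by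
        rw [← Finset.sum_filter_add_sum_filter_not s
          (fun j : Fin T => |((i:ℕ):ℤ) - ((j:ℕ):ℤ)| ≤ (m:ℤ)) (fun j => covar (P T) (Z T i) (Z T j))]
        have h0 : ∑ j ∈ s.filter (fun j : Fin T => ¬ |((i:ℕ):ℤ) - ((j:ℕ):ℤ)| ≤ (m:ℤ)),
            covar (P T) (Z T i) (Z T j) = 0 := by
          refine Finset.sum_eq_zero fun j hj => ?_
          have := (Finset.mem_filter.mp hj).2
          exact hcov T i j (lt_of_not_ge this)
        rw [h0, add_zero]
        exact Finset.sum_le_sum fun j _ => le_abs_self _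
      have hcard : (s.filter (fun j : Fin T => |((i:ℕ):ℤ) - ((j:ℕ):ℤ)| ≤ (m:ℤ))).card ≤ 2*m+1 := by
        have hinj : Set.InjOn (fun j : Fin T => ((j:ℕ):ℤ))
            ↑(s.filter (fun j : Fin T => |((i:ℕ):ℤ) - ((j:ℕ):ℤ)| ≤ (m:ℤ))) := by
          intro a _ b _ hab
          have hab' : ((a:ℕ):ℤ) = ((b:ℕ):ℤ) := hab
          exact Fin.ext (by exact_mod_cast hab')
        have hmap : ∀ j ∈ s.filter (fun j : Fin T => |((i:ℕ):ℤ) - ((j:ℕ):ℤ)| ≤ (m:ℤ)),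
            ((j:ℕ):ℤ) ∈ Finset.Icc (((i:ℕ):ℤ) - m) (((i:ℕ):ℤ) + m) := by
          intro j hj
          have := (Finset.mem_filter.mp hj).2
          rw [Finset.mem_Icc]
          rw [abs_le] at this
          omega
        have := Finset.card_le_card_of_injOn _ hmap hinj
        calc (s.filter (fun j : Fin T => |((i:ℕ):ℤ) - ((j:ℕ):ℤ)| ≤ (m:ℤ))).card
            ≤ (Finset.Icc (((i:ℕ):ℤ) - m) (((i:ℕ):ℤ) + m)).card := this
          _ = 2*m+1 := by rw [Int.card_Icc]; omega
      have hVbd : ∀ j ∈ s.filter (fun j : Fin T => |((i:ℕ):ℤ) - ((j:ℕ):ℤ)| ≤ (m:ℤ)),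
          |covar (P T) (Z T i) (Z T j)| ≤ V := by
        intro j _
        calc |covar (P T) (Z T i) (Z T j)|
            ≤ (variance (Z T i) (P T) + variance (Z T j) (P T)) / 2 :=
              abs_covar_le (hZ2 T i) (hZ2 T j)
          _ ≤ (V + V) / 2 := by gcongr <;> [exact hvarle i; exact hvarle j]
          _ = V := by ring
      calc ∑ j ∈ s, covar (P T) (Z T i) (Z T j)
          ≤ ∑ j ∈ s.filter (fun j : Fin T => |((i:ℕ):ℤ) - ((j:ℕ):ℤ)| ≤ (m:ℤ)),
            |covar (P T) (Z T i) (Z T j)| := hle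
        _ ≤ (s.filter (fun j : Fin T => |((i:ℕ):ℤ) - ((j:ℕ):ℤ)| ≤ (m:ℤ))).card * V :=
            Finset.sum_le_card_nsmul _ _ V hVbd |>.trans_eq (by
              simp [nsmul_eq_mul])
        _ ≤ (2*m+1) * V := by
            have : ((s.filter (fun j : Fin T => |((i:ℕ):ℤ) - ((j:ℕ):ℤ)| ≤ (m:ℤ))).card : ℝ) ≤ (2*m+1 : ℝ) := by
              exact_mod_cast hcard
            nlinarith
    calc ∑ i ∈ s, ∑ j ∈ s, covar (P T) (Z T i) (Z T j)
        ≤ ∑ i ∈ s, (2*m+1) * V := Finset.sum_le_sum inner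
      _ = s.card * ((2*m+1) * V) := by rw [Finset.sum_const, nsmul_eq_mul]
  -- Chebyshev bound for a fixed good subset
  have hcheb : ∀ s : Finset (Fin T), s.card = mT →
      P T {ω | ε < |Real.sqrt T * ((mT : ℝ)⁻¹ * ∑ t ∈ s, Z T t ω - μ T)|}
        ≤ ENNReal.ofReal (((k : ℝ) * (2*m+1)) * V / ε^2) := by
    intro s hs
    set X : Ω T → ℝ := fun ω => (mT : ℝ)⁻¹ * ∑ t ∈ s, Z T t ω with hX
    have hXmem : MemLp X 2 (P T) := by
      have h := memLp_finset_sum' (μ := P T) s (fun i (_ : i ∈ s) => hZ2 T i)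
      rw [Finset.sum_fn] at h
      exact h.const_mul _
    have hXmean : ∫ ω, X ω ∂(P T) = μ T := by
      rw [hX]
      simp only
      rw [integral_const_mul, integral_finset_sum s (fun i _ => (hZ2 T i).integrable one_le_two)]
      simp only [hmean]
      rw [Finset.sum_const, hs, nsmul_eq_mul]
      field_simp
    have hXvar : variance X (P T) ≤ (2*m+1) * V / mT := by
      have h1 : variance X (P T) = ((mT:ℝ)⁻¹)^2 * variance (fun ω => ∑ t ∈ s, Z T t ω) (P T) :=
        variance_const_mul _ _ _
      rw [h1]
      have h2 := hvs s
      rw [hs] at h2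
      have hmV : 0 ≤ (2*m+1 : ℝ) * V := by positivity
      calc ((mT:ℝ)⁻¹)^2 * variance (fun ω => ∑ t ∈ s, Z T t ω) (P T)
          ≤ ((mT:ℝ)⁻¹)^2 * (mT * ((2*m+1) * V)) := by
            refine mul_le_mul_of_nonneg_left h2 (by positivity)
        _ = (2*m+1) * V / mT := by field_simp
    have hsub : {ω | ε < |Real.sqrt T * ((mT : ℝ)⁻¹ * ∑ t ∈ s, Z T t ω - μ T)|}
        ⊆ {ω | ε / Real.sqrt T ≤ |X ω - ∫ a, X a ∂(P T)|} := by
      intro ω hω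
      simp only [Set.mem_setOf_eq] at hω ⊢
      rw [hXmean, abs_mul, abs_of_nonneg hsqT.le] at *
      rw [div_le_iff₀ hsqT, mul_comm]
      exact hω.le
    have hcpos : 0 < ε / Real.sqrt T := div_pos hε hsqT
    calc P T {ω | ε < |Real.sqrt T * ((mT : ℝ)⁻¹ * ∑ t ∈ s, Z T t ω - μ T)|}
        ≤ P T {ω | ε / Real.sqrt T ≤ |X ω - ∫ a, X a ∂(P T)|} := measure_mono hsub
      _ ≤ ENNReal.ofReal (variance X (P T) / (ε / Real.sqrt T)^2) :=
          meas_ge_le_variance_div_sq hXmem hcpos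
      _ ≤ ENNReal.ofReal (((k : ℝ) * (2*m+1)) * V / ε^2) := by
          refine ENNReal.ofReal_le_ofReal ?_
          have hT0 : (0:ℝ) < T := by exact_mod_cast hT
          have hsq : (ε / Real.sqrt T)^2 = ε^2 / T := by
            rw [div_pow, Real.sq_sqrt hT0.le]
          rw [hsq, div_div_eq_mul_div]
          have hmV : (0:ℝ) ≤ (2*m+1) * V := by positivity
          have hnum : variance X (P T) * T ≤ (k:ℝ) * (2*m+1) * V := by
            have h3 : variance X (P T) * T ≤ ((2*m+1) * V / mT) * T :=
              mul_le_mul_of_nonneg_right hXvar hT0.le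
            refine h3.trans ?_
            rw [div_mul_eq_mul_div, div_le_iff₀ hmTpos]
            nlinarith [mul_le_mul_of_nonneg_left hTk hmV]
          gcongr
  -- decompose the event according to the value of S
  set b := ENNReal.ofReal (((k : ℝ) * (2*m+1)) * V / ε^2) with hb
  have hvecmeas : Measurable (fun ω => fun t => Z T t ω) :=
    measurable_pi_lambda _ (fun t => hZmeas T t)
  have hBset : ∀ s : Finset (Fin T), MeasurableSet
      {v : Fin T → ℝ | ε < |Real.sqrt T * ((mT : ℝ)⁻¹ * ∑ t ∈ s, v t - μ T)|} := by
    intro s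
    have hg : Measurable (fun v : Fin T → ℝ =>
        |Real.sqrt T * ((mT : ℝ)⁻¹ * ∑ t ∈ s, v t - μ T)|) :=
      ((((Finset.measurable_sum s (fun t _ => measurable_pi_apply t)).const_mul
        _).sub measurable_const).const_mul _).abs
    exact measurableSet_lt measurable_const hg
  have hSpre : ∀ s : Finset (Fin T), MeasurableSet (S T ⁻¹' {s}) := fun s =>
    hSmeas T MeasurableSpace.measurableSet_top
  have hEsub : {ω | ε < |Real.sqrt T * ((mT : ℝ)⁻¹ * ∑ t ∈ S T ω, Z T t ω - μ T)|}
      ⊆ ⋃ s ∈ (Finset.univ : Finset (Finset (Fin T))),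
        (S T ⁻¹' {s} ∩ (fun ω => fun t => Z T t ω) ⁻¹'
          {v | ε < |Real.sqrt T * ((mT:ℝ)⁻¹ * ∑ t ∈ s, v t - μ T)|}) := by
    intro ω hω
    exact Set.mem_biUnion (Finset.mem_univ (S T ω)) ⟨rfl, hω⟩
  calc P T {ω | ε < |Real.sqrt T * ((mT : ℝ)⁻¹ * ∑ t ∈ S T ω, Z T t ω - μ T)|}
      ≤ ∑ s ∈ (Finset.univ : Finset (Finset (Fin T))),
          P T (S T ⁻¹' {s} ∩ (fun ω => fun t => Z T t ω) ⁻¹'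
            {v | ε < |Real.sqrt T * ((mT:ℝ)⁻¹ * ∑ t ∈ s, v t - μ T)|}) :=
        (measure_mono hEsub).trans (measure_biUnion_finset_le _ _)
    _ = ∑ s ∈ (Finset.univ : Finset (Finset (Fin T))),
          P T (S T ⁻¹' {s}) * P T ((fun ω => fun t => Z T t ω) ⁻¹'
            {v | ε < |Real.sqrt T * ((mT:ℝ)⁻¹ * ∑ t ∈ s, v t - μ T)|}) := by
        refine Finset.sum_congr rfl fun s _ => ?_
        exact (hSindep T).measure_inter_preimage_eq_mul _ _
          MeasurableSpace.measurableSet_top (hBset s)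
    _ ≤ ∑ s ∈ (Finset.univ : Finset (Finset (Fin T))), P T (S T ⁻¹' {s}) * b := by
        refine Finset.sum_le_sum fun s _ => ?_
        by_cases hcase : s.card = mT
        · refine mul_le_mul_right ?_ _
          have heq : (fun ω => fun t => Z T t ω) ⁻¹'
              {v | ε < |Real.sqrt T * ((mT:ℝ)⁻¹ * ∑ t ∈ s, v t - μ T)|}
              = {ω | ε < |Real.sqrt T * ((mT : ℝ)⁻¹ * ∑ t ∈ s, Z T t ω - μ T)|} := rfl
          rw [heq, hb]
          exact hcheb s hcase
        · have hempty : S T ⁻¹' {s} = ∅ := by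
            ext ω
            simp only [Set.mem_preimage, Set.mem_singleton_iff, Set.mem_empty_iff_false,
              iff_false]
            intro h
            exact hcase (h ▸ hScard T ω)
          rw [hempty]
          simp
    _ = (∑ s ∈ (Finset.univ : Finset (Finset (Fin T))), P T (S T ⁻¹' {s})) * b :=
        (Finset.sum_mul _ _ _).symm
    _ ≤ 1 * b := by
        refine mul_le_mul_left ?_ b
        have hdisj : (↑(Finset.univ : Finset (Finset (Fin T))) :
            Set (Finset (Fin T))).PairwiseDisjoint (fun s => S T ⁻¹' {s}) := by
          intro s1 _ s2 _ hne
          refine Set.disjoint_left.mpr fun ω h1 h2 => hne ?_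
          simp only [Set.mem_preimage, Set.mem_singleton_iff] at h1 h2
          rw [← h1, ← h2]
        rw [← measure_biUnion_finset hdisj (fun s _ => hSpre s)]
        exact (measure_mono (Set.subset_univ _)).trans_eq measure_univ
    _ = b := one_mul b
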